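/- Let ⊩ be a one-dimensional consequence relation over a signature containing the binary connective ∨, and suppose its Set-Fmla companion ⊢ satisfies the disjunction property (Disj): Γ ∪ {φ ∨ ψ} ⊢ χ iff Γ ∪ {φ} ⊢ χ and Γ ∪ {ψ} ⊢ χ. If a Set-Set Hilbert system H satisfies ⊢_H = ⊩, then there exists a Set-Fmla Hilbert system H' with ⊢_{H'} equal to the Set-Fmla companion ⊢ of ⊩, and H' is finite whenever H is finite. -/

import Mathlib

/-- Formulas over the signature Σ with unary ¬, ∘ and binary ∧, ∨, →,
freely generated from a denumerable set of propositional variables. -/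
inductive Fm : Type where
  | var : ℕ → Fm
  | neg : Fm → Fm
  | circ : Fm → Fm
  | conj : Fm → Fm → Fm
  | disj : Fm → Fm → Fm
  | imp : Fm → Fm → Fm
deriving DecidableEq

/-- Substitutions act homomorphically on formulas. -/
def subst (σ : ℕ → Fm) : Fm → Fm
  | .var n => σ n
  | .neg φ => .neg (subst σ φ)
  | .circ φ => .circ (subst σ φ)
  | .conj φ ψ => .conj (subst σ φ) (subst σ ψ)
  | .disj φ ψ => .disj (subst σ φ) (subst σ ψ)
  | .imp φ ψ => .imp (subst σ φ) (subst σ ψ)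

/-- A Set-Fmla rule schema: a finite antecedent and a single succedent formula. -/
abbrev Rule : Type := Finset Fm × Fm

/-- Derivability in a Set-Fmla Hilbert system: `Derives H Γ φ` holds iff φ can be
obtained from members of Γ by finitely many applications of substitution instances
of rules of `H`. -/
inductive Derives (H : Set Rule) : Set Fm → Fm → Prop where
  | prem : ∀ {Γ : Set Fm} {φ : Fm}, φ ∈ Γ → Derives H Γ φ
  | rule : ∀ {Γ : Set Fm} (r : Rule) (σ : ℕ → Fm), r ∈ H →
      (∀ ψ ∈ r.1, Derives H Γ (subst σ ψ)) → Derives H Γ (subst σ r.2)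

/-- A Set-Set rule schema: a finite antecedent and a finite succedent. -/
abbrev RuleSS : Type := Finset Fm × Finset Fm

/-- Derivability in a Set-Set Hilbert system (inductive rendering of the
tree-style derivations): a branch closes when the current label meets the
succedent `Δ`, and applying a rule instance whose antecedent is contained in the
current label opens one branch per formula of its succedent (none when the
succedent is empty, corresponding to a ∗-discontinued branch). -/
inductive DerSS (H : Set RuleSS) : Set Fm → Set Fm → Prop where
  | close : ∀ {Γ Δ : Set Fm} {φ : Fm}, φ ∈ Γ → φ ∈ Δ → DerSS H Γ Δ
  | rule : ∀ {Γ Δ : Set Fm} (r : RuleSS) (σ : ℕ → Fm), r ∈ H →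
      (∀ ψ ∈ r.1, subst σ ψ ∈ Γ) →
      (∀ ω ∈ r.2, DerSS H (Γ ∪ {subst σ ω}) Δ) → DerSS H Γ Δ

/-- A one-dimensional (Set-Set) consequence relation: overlap, dilution and cut. -/
def OneDimCR (R : Set Fm → Set Fm → Prop) : Prop :=
  (∀ Γ Δ : Set Fm, (Γ ∩ Δ).Nonempty → R Γ Δ) ∧
  (∀ Γ Γ' Δ Δ' : Set Fm, R Γ Δ → R (Γ ∪ Γ') (Δ ∪ Δ')) ∧
  (∀ Γ Δ : Set Fm, (∀ Ω : Set Fm, R (Ω ∪ Γ) (Δ ∪ Ωᶜ)) → R Γ Δ)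

/-! Each Set-Set rule `Φ / Ψ` is translated into the Set-Fmla rule
`{φ ⋎ p | φ ∈ Φ} / ψ₁ ⋎ ⋯ ⋎ ψₙ ⋎ p` with `p` fresh; together with six rules for `⋎` these
axiomatize the companion. (Disj) makes all of them sound. Conversely, by induction on a Set-Set
derivation of `{φ}` from `Γ`, every `Γ₀` deriving `γ ⋎ θ` for all `γ ∈ Γ` derives `φ ⋎ θ`: a rule
application yields `ψ₁ ⋎ ⋯ ⋎ ψₙ ⋎ θ`, and the branches of the derivation remove the disjuncts
`ψᵢ` one at a time. For `Γ₀ = Γ` and `θ = φ` this gives `φ ⋎ φ`, hence `φ`. -/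

infixr:65 " ⋎ " => Fm.disj

theorem subst_subst (τ σ : ℕ → Fm) (φ : Fm) :
    subst τ (subst σ φ) = subst (fun n => subst τ (σ n)) φ := by
  induction φ <;> simp_all [subst]

def bigDisj (l : List Fm) (θ : Fm) : Fm := l.foldr Fm.disj θ

@[simp] theorem bigDisj_nil (θ : Fm) : bigDisj [] θ = θ := rfl

@[simp] theorem bigDisj_cons (φ : Fm) (l : List Fm) (θ : Fm) :
    bigDisj (φ :: l) θ = φ ⋎ bigDisj l θ := rfl

theorem subst_bigDisj (σ : ℕ → Fm) (l : List Fm) (θ : Fm) :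
    subst σ (bigDisj l θ) = bigDisj (l.map (subst σ)) (subst σ θ) := by
  induction l <;> simp_all [subst]

def shift : Fm → Fm := subst fun n => .var (n + 1)

theorem subst_shift (σ : ℕ → Fm) (φ : Fm) :
    subst σ (shift φ) = subst (fun n => σ (n + 1)) φ :=
  subst_subst σ _ φ

-- The side variable is `var 0`; shifting the rule's own variables up by one keeps it fresh.
noncomputable def setFmlaRule (r : RuleSS) : Rule :=
  (r.1.image fun φ => shift φ ⋎ .var 0, bigDisj (r.2.toList.map shift) (.var 0))

theorem subst_setFmlaRule_fst (r : RuleSS) (σ : ℕ → Fm) :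
    subst σ '' ↑(setFmlaRule r).1 = (· ⋎ σ 0) '' (subst (fun n => σ (n + 1)) '' ↑r.1) := by
  simp [setFmlaRule, Set.image_image, subst, subst_shift]

theorem subst_setFmlaRule_snd (r : RuleSS) (σ : ℕ → Fm) :
    subst σ (setFmlaRule r).2 = bigDisj (r.2.toList.map (subst fun n => σ (n + 1))) (σ 0) := by
  simp [setFmlaRule, subst_bigDisj, subst, Function.comp_def, subst_shift]

def orRules : Finset Rule :=
  {({.var 0}, .var 0 ⋎ .var 1), ({.var 1}, .var 0 ⋎ .var 1), ({.var 0 ⋎ .var 0}, .var 0),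
    ({.var 0 ⋎ (.var 0 ⋎ .var 1)}, .var 0 ⋎ .var 1),
    ({.var 0 ⋎ (.var 1 ⋎ .var 2)}, .var 1 ⋎ (.var 0 ⋎ .var 2)),
    ({.var 0 ⋎ .var 2}, .var 0 ⋎ (.var 1 ⋎ .var 2))}

namespace OneDimCR

variable {R : Set Fm → Set Fm → Prop} {Γ Δ : Set Fm} {χ : Fm}

theorem mono (hR : OneDimCR R) (h : R Γ Δ) {Γ' Δ' : Set Fm} (hΓ : Γ ⊆ Γ') (hΔ : Δ ⊆ Δ') :
    R Γ' Δ' := by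
  simpa [Set.union_eq_right.2 hΓ, Set.union_eq_right.2 hΔ] using hR.2.1 Γ Γ' Δ Δ' h

theorem refl (hR : OneDimCR R) (φ : Fm) : R {φ} {φ} :=
  hR.1 _ _ ⟨φ, rfl, rfl⟩

theorem cut_right (hR : OneDimCR R) (h : R Γ Δ) (hΔ : ∀ δ ∈ Δ, R (Γ ∪ {δ}) {χ}) : R Γ {χ} := by
  refine hR.2.2 _ _ fun Ω => ?_
  by_cases hΩ : ∃ δ ∈ Δ, δ ∈ Ω
  · obtain ⟨δ, hδΔ, hδΩ⟩ := hΩ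
    exact hR.mono (hΔ δ hδΔ) (by simp [Set.insert_subset_iff, hδΩ]) Set.subset_union_left
  · push Not at hΩ
    exact hR.mono h Set.subset_union_right fun δ hδ => Or.inr (hΩ δ hδ)

theorem cut_left (hR : OneDimCR R) {S : Set Fm} (h : R (Γ ∪ S) {χ}) (hS : ∀ s ∈ S, R Γ {s}) :
    R Γ {χ} := by
  refine hR.2.2 _ _ fun Ω => ?_
  by_cases hΩ : ∃ s ∈ S, s ∉ Ω
  · obtain ⟨s, hsS, hsΩ⟩ := hΩ
    exact hR.mono (hS s hsS) Set.subset_union_right (Set.singleton_subset_iff.2 (Or.inr hsΩ))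
  · push Not at hΩ
    exact hR.mono h (Set.union_subset Set.subset_union_right
      fun s hs => Or.inl (hΩ s hs)) Set.subset_union_left

theorem trans (hR : OneDimCR R) {ψ : Fm} (h₁ : R Γ {ψ}) (h₂ : R {ψ} {χ}) : R Γ {χ} :=
  hR.cut_left (S := {ψ}) (hR.mono h₂ Set.subset_union_right le_rfl) (by simpa using h₁)

end OneDimCR

def DisjProperty (R : Set Fm → Set Fm → Prop) : Prop :=
  ∀ (Γ : Set Fm) (φ ψ χ : Fm), R (Γ ∪ {φ ⋎ ψ}) {χ} ↔ R (Γ ∪ {φ}) {χ} ∧ R (Γ ∪ {ψ}) {χ}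

namespace DisjProperty

variable {R : Set Fm → Set Fm → Prop} {φ ψ χ θ : Fm}

theorem singleton_iff (hD : DisjProperty R) : R {φ ⋎ ψ} {χ} ↔ R {φ} {χ} ∧ R {ψ} {χ} := by
  simpa using hD ∅ φ ψ χ

theorem inl (hR : OneDimCR R) (hD : DisjProperty R) (φ ψ : Fm) : R {φ} {φ ⋎ ψ} :=
  (hD.singleton_iff.1 (hR.refl _)).1

theorem inr (hR : OneDimCR R) (hD : DisjProperty R) (φ ψ : Fm) : R {ψ} {φ ⋎ ψ} :=
  (hD.singleton_iff.1 (hR.refl _)).2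

theorem mem_bigDisj (hR : OneDimCR R) (hD : DisjProperty R) {δ : Fm} :
    ∀ {l : List Fm}, δ ∈ l ∨ δ = θ → R {δ} {bigDisj l θ}
  | [], h => by
    obtain rfl : δ = θ := by simpa using h
    exact hR.refl δ
  | φ :: l, h => by
    by_cases hδ : δ = φ
    · subst hδ
      exact hD.inl hR δ _
    · have h' : δ ∈ l ∨ δ = θ := by simpa [hδ] using h
      exact hR.trans (mem_bigDisj hR hD h') (hD.inr hR φ _)

theorem disj_image (hR : OneDimCR R) (hD : DisjProperty R) {S : Set Fm} (hS : S.Finite) :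
    ∀ Γ : Set Fm, R (Γ ∪ S) {χ} → R (Γ ∪ {θ}) {χ} → R (Γ ∪ (· ⋎ θ) '' S) {χ} := by
  induction S, hS using Set.Finite.induction_on with
  | empty => exact fun Γ h _ => by simpa using h
  | @insert φ S _ _ ih =>
    intro Γ hφS hθ
    have hφ : R (Γ ∪ (· ⋎ θ) '' S ∪ {φ}) {χ} :=
      hR.mono (ih (Γ ∪ {φ}) (hR.mono hφS (by grind) le_rfl) (hR.mono hθ (by grind) le_rfl))
        (by grind) le_rfl
    have := (hD _ φ θ χ).2 ⟨hφ, hR.mono hθ (by grind) le_rfl⟩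
    simpa [Set.image_insert_eq, Set.union_insert] using this

end DisjProperty

def IsSoundRule (R : Set Fm → Set Fm → Prop) (r : Rule) : Prop :=
  ∀ σ : ℕ → Fm, R (subst σ '' ↑r.1) {subst σ r.2}

def IsSoundRuleSS (R : Set Fm → Set Fm → Prop) (r : RuleSS) : Prop :=
  ∀ σ : ℕ → Fm, R (subst σ '' ↑r.1) (subst σ '' ↑r.2)

section Soundness

variable {R : Set Fm → Set Fm → Prop}

theorem DerSS.of_mem {H : Set RuleSS} {r : RuleSS} (hr : r ∈ H) (σ : ℕ → Fm) :
    DerSS H (subst σ '' ↑r.1) (subst σ '' ↑r.2) :=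
  .rule r σ hr (fun _ hψ => Set.mem_image_of_mem _ hψ)
    fun _ hω => .close (Set.mem_union_right _ rfl) (Set.mem_image_of_mem _ hω)

theorem isSoundRuleSS_of_mem {H : Set RuleSS} (hH : ∀ Γ Δ : Set Fm, DerSS H Γ Δ ↔ R Γ Δ)
    {r : RuleSS} (hr : r ∈ H) : IsSoundRuleSS R r :=
  fun σ => (hH _ _).1 (DerSS.of_mem hr σ)

theorem DisjProperty.isSoundRule_setFmlaRule (hR : OneDimCR R) (hD : DisjProperty R)
    {r : RuleSS} (hr : IsSoundRuleSS R r) : IsSoundRule R (setFmlaRule r) := by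
  intro σ
  set τ : ℕ → Fm := fun n => σ (n + 1)
  have hdisj : ∀ δ ∈ subst τ '' ↑r.2 ∪ {σ 0},
      R {δ} {bigDisj (r.2.toList.map (subst τ)) (σ 0)} := by
    rintro δ (⟨ψ, hψ, rfl⟩ | rfl)
    · exact hD.mem_bigDisj hR (.inl (List.mem_map_of_mem (Finset.mem_toList.2 hψ)))
    · exact hD.mem_bigDisj hR (.inr rfl)
  have hprem : R (subst τ '' ↑r.1) {bigDisj (r.2.toList.map (subst τ)) (σ 0)} :=
    hR.cut_right (hr τ) fun δ hδ =>
      hR.mono (hdisj δ (.inl hδ)) Set.subset_union_right le_rfl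
  rw [subst_setFmlaRule_fst, subst_setFmlaRule_snd, ← Set.empty_union (_ '' _)]
  exact hD.disj_image hR (r.1.finite_toSet.image _) ∅ (by simpa using hprem)
    (by simpa using hdisj (σ 0) (.inr rfl))

theorem DisjProperty.isSoundRule_of_mem_orRules (hR : OneDimCR R) (hD : DisjProperty R)
    {r : Rule} (hr : r ∈ orRules) : IsSoundRule R r := by
  intro σ
  simp only [orRules, Finset.mem_insert, Finset.mem_singleton] at hr
  have mem {δ : Fm} (l : List Fm) (θ : Fm) (h : δ ∈ l ∨ δ = θ) := hD.mem_bigDisj hR h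
  rcases hr with rfl | rfl | rfl | rfl | rfl | rfl <;> simp only [Finset.coe_singleton,
    Set.image_singleton, subst]
  · exact hD.inl hR _ _
  · exact hD.inr hR _ _
  · exact hD.singleton_iff.2 ⟨hR.refl _, hR.refl _⟩
  · exact hD.singleton_iff.2 ⟨hD.inl hR _ _, hR.refl _⟩
  · exact hD.singleton_iff.2 ⟨mem [σ 1, σ 0] (σ 2) (by simp),
      hD.singleton_iff.2 ⟨mem [σ 1, σ 0] (σ 2) (by simp), mem [σ 1, σ 0] (σ 2) (by simp)⟩⟩
  · exact hD.singleton_iff.2 ⟨mem [σ 0, σ 1] (σ 2) (by simp), mem [σ 0, σ 1] (σ 2) (by simp)⟩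

theorem Derives.sound (hR : OneDimCR R) {H' : Set Rule} (hH' : ∀ r ∈ H', IsSoundRule R r)
    {Γ : Set Fm} {φ : Fm} (h : Derives H' Γ φ) : R Γ {φ} := by
  induction h with
  | prem hφ => exact hR.1 _ _ ⟨_, hφ, rfl⟩
  | rule r σ hr _ ih =>
    refine hR.cut_left (hR.mono (hH' r hr σ) Set.subset_union_right le_rfl) ?_
    rintro _ ⟨ψ, hψ, rfl⟩
    exact ih ψ hψ

end Soundness

namespace Derives

variable {H' : Set Rule} {Γ : Set Fm} {φ ψ χ θ : Fm}

theorem of_unary_rule (a c : Fm) (h : ({a}, c) ∈ H') (σ : ℕ → Fm)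
    (hd : Derives H' Γ (subst σ a)) : Derives H' Γ (subst σ c) :=
  .rule _ σ h fun ψ hψ => by rwa [Finset.mem_singleton.1 hψ]

theorem bigDisj_of_setFmlaRule {r : RuleSS} (hr : setFmlaRule r ∈ H') (σ : ℕ → Fm) (θ : Fm)
    (h : ∀ φ ∈ r.1, Derives H' Γ (subst σ φ ⋎ θ)) :
    Derives H' Γ (bigDisj (r.2.toList.map (subst σ)) θ) := by
  let σ' : ℕ → Fm := fun | 0 => θ | n + 1 => σ n
  refine subst_setFmlaRule_snd r σ' ▸ .rule _ σ' hr fun ψ hψ => ?_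
  obtain ⟨φ, hφ, rfl⟩ := Finset.mem_image.1 hψ
  simpa [subst, subst_shift] using h φ hφ

def subst₃ (φ ψ χ : Fm) : ℕ → Fm
  | 0 => φ
  | 1 => ψ
  | _ => χ

variable (hOr : ↑orRules ⊆ H')
include hOr

theorem or_inl (h : Derives H' Γ φ) : Derives H' Γ (φ ⋎ ψ) :=
  of_unary_rule (.var 0) (.var 0 ⋎ .var 1)
    (hOr (by simp [orRules])) (subst₃ φ ψ ψ) h

theorem or_inr (h : Derives H' Γ ψ) : Derives H' Γ (φ ⋎ ψ) :=
  of_unary_rule (.var 1) (.var 0 ⋎ .var 1)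
    (hOr (by simp [orRules])) (subst₃ φ ψ ψ) h

theorem or_self (h : Derives H' Γ (φ ⋎ φ)) : Derives H' Γ φ :=
  of_unary_rule (.var 0 ⋎ .var 0) (.var 0)
    (hOr (by simp [orRules])) (subst₃ φ φ φ) h

theorem or_or_self (h : Derives H' Γ (φ ⋎ (φ ⋎ ψ))) : Derives H' Γ (φ ⋎ ψ) :=
  of_unary_rule (.var 0 ⋎ (.var 0 ⋎ .var 1)) (.var 0 ⋎ .var 1)
    (hOr (by simp [orRules])) (subst₃ φ ψ ψ) h

theorem or_left_comm (h : Derives H' Γ (φ ⋎ (ψ ⋎ χ))) : Derives H' Γ (ψ ⋎ (φ ⋎ χ)) :=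
  of_unary_rule (.var 0 ⋎ (.var 1 ⋎ .var 2)) (.var 1 ⋎ (.var 0 ⋎ .var 2))
    (hOr (by simp [orRules])) (subst₃ φ ψ χ) h

theorem or_weaken (h : Derives H' Γ (φ ⋎ χ)) : Derives H' Γ (φ ⋎ (ψ ⋎ χ)) :=
  of_unary_rule (.var 0 ⋎ .var 2) (.var 0 ⋎ (.var 1 ⋎ .var 2))
    (hOr (by simp [orRules])) (subst₃ φ ψ χ) h

theorem or_weaken_bigDisj (l : List Fm) (h : Derives H' Γ (φ ⋎ θ)) :
    Derives H' Γ (φ ⋎ bigDisj l θ) := by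
  induction l with
  | nil => exact h
  | cons ψ l ih => exact ih.or_weaken hOr

end Derives

def EntailsModuloDisj (H' : Set Rule) (Γ₀ Γ : Set Fm) (φ : Fm) : Prop :=
  ∀ θ : Fm, (∀ γ ∈ Γ, Derives H' Γ₀ (γ ⋎ θ)) → Derives H' Γ₀ (φ ⋎ θ)

section Completeness

variable {H : Set RuleSS} {H' : Set Rule} {Γ₀ Γ : Set Fm} {φ θ : Fm}

theorem derives_or_of_or_bigDisj (hOr : ↑orRules ⊆ H') {l : List Fm}
    (hl : ∀ δ ∈ l, EntailsModuloDisj H' Γ₀ (Γ ∪ {δ}) φ)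
    (hΓ : ∀ γ ∈ Γ, Derives H' Γ₀ (γ ⋎ θ)) (h : Derives H' Γ₀ (φ ⋎ bigDisj l θ)) :
    Derives H' Γ₀ (φ ⋎ θ) := by
  induction l with
  | nil => exact h
  | cons δ l ih =>
    have hδ : Derives H' Γ₀ (δ ⋎ (φ ⋎ bigDisj l θ)) := h.or_left_comm hOr
    have hφ : Derives H' Γ₀ (φ ⋎ (φ ⋎ bigDisj l θ)) := by
      refine hl δ (.head _) _ fun γ hγ => ?_
      rcases hγ with hγ | rfl
      · simpa using (hΓ γ hγ).or_weaken_bigDisj hOr (φ :: l)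
      · exact hδ
    exact ih (fun δ' hδ' => hl δ' (.tail _ hδ')) (hφ.or_or_self hOr)

theorem DerSS.entailsModuloDisj (hH : ∀ r ∈ H, setFmlaRule r ∈ H') (hOr : ↑orRules ⊆ H')
    {Δ : Set Fm} (hd : DerSS H Γ Δ) (hΔ : Δ ⊆ {φ}) : EntailsModuloDisj H' Γ₀ Γ φ := by
  induction hd with
  | close hΓ hΔ' =>
    obtain rfl := hΔ hΔ'
    exact fun θ h => h _ hΓ
  | rule r σ hr hant _ ih =>
    intro θ hΓ
    refine derives_or_of_or_bigDisj hOr (l := r.2.toList.map (subst σ)) ?_ hΓ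
      ((Derives.bigDisj_of_setFmlaRule (hH r hr) σ θ fun ψ hψ => hΓ _ (hant ψ hψ)).or_inr hOr)
    intro δ hδ
    obtain ⟨ω, hω, rfl⟩ := List.mem_map.1 hδ
    exact ih ω (Finset.mem_toList.1 hω) hΔ

end Completeness

/-- Shoesmith–Smiley: if the Set-Fmla companion of a
one-dimensional consequence relation satisfies (Disj), then any Set-Set Hilbert
system axiomatizing it may be converted into a Set-Fmla Hilbert system for the
companion which is finite whenever the original system is finite. -/
theorem stmt15 (R : Set Fm → Set Fm → Prop) (hR : OneDimCR R)
    (hDisj : ∀ (Γ : Set Fm) (φ ψ χ : Fm),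
      R (Γ ∪ {Fm.disj φ ψ}) {χ} ↔ R (Γ ∪ {φ}) {χ} ∧ R (Γ ∪ {ψ}) {χ})
    (H : Set RuleSS) (hH : ∀ Γ Δ : Set Fm, DerSS H Γ Δ ↔ R Γ Δ) :
    ∃ H' : Set Rule,
      (∀ (Γ : Set Fm) (φ : Fm), Derives H' Γ φ ↔ R Γ {φ}) ∧
      (H.Finite → H'.Finite) := by
  have hOr : ↑orRules ⊆ setFmlaRule '' H ∪ ↑orRules := Set.subset_union_right
  refine ⟨setFmlaRule '' H ∪ ↑orRules, fun Γ φ => ⟨fun h => ?_, fun h => ?_⟩,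
    fun hH => (hH.image _).union orRules.finite_toSet⟩
  · refine h.sound hR fun r hr => ?_
    rcases hr with ⟨r, hr, rfl⟩ | hr
    · exact DisjProperty.isSoundRule_setFmlaRule hR hDisj (isSoundRuleSS_of_mem hH hr)
    · exact DisjProperty.isSoundRule_of_mem_orRules hR hDisj hr
  · have hφφ := ((hH Γ {φ}).2 h).entailsModuloDisj (fun r hr => .inl ⟨r, hr, rfl⟩) hOr le_rfl
      φ fun γ hγ => (Derives.prem hγ).or_inl hOr
    exact hφφ.or_self hOr
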